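/- Let n ≥ 8 and for each i ∈ {1,...,n} let v^i ∈ ℝⁿ be a vector with v^i_i = 1/2 and |v^i_j| ≤ 1 for all j. Let y_1,...,y_n be independent random variables, each uniformly distributed on [−1,1], and set u = Σ_{i=1}^n y_i v^i. Then with probability at least 1/4, simultaneously min_i |u_i| > 1/(4n) and max_i |u_i| < 2√(n ln n). -/

import Mathlib

/-!
Fix a coordinate `i` and write `u_i = S_i + y_i / 2`, where `S_i = ∑_{j ≠ i} y_j v^j_i` is
independent of `y_i`. Conditionally on `S_i`, the variable `u_i` has density at most `1`, so
`P(|u_i| ≤ 1/(4n)) ≤ 1/(2n)`. On the other hand `u_i` is a sum of `n` independent centred terms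
bounded by `1`, so Hoeffding's inequality gives `P(|u_i| ≥ 2√(n ln n)) ≤ 2 exp(-2 ln n) = 2/n²`.
A union bound over the `n` coordinates bounds the failure probability by `1/2 + 2/n ≤ 3/4`.
-/

open MeasureTheory ProbabilityTheory Set Real
open scoped ENNReal NNReal

section

lemma exp_neg_sq_two_sqrt_mul_log_div (x : ℝ) (hx : 1 ≤ x) :
    exp (-(2 * √(x * log x)) ^ 2 / (2 * x)) = (x ^ 2)⁻¹ := by
  have hlog : 0 ≤ log x := log_nonneg hx
  rw [mul_pow, sq_sqrt (by positivity), show -(2 ^ 2 * (x * log x)) / (2 * x) = -(2 * log x) by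
    field_simp, exp_neg, ← log_rpow (by positivity), exp_log (by positivity), rpow_two]

noncomputable def uniformNegOneOne : Measure ℝ := (2 : ℝ≥0∞)⁻¹ • volume.restrict (Icc (-1) 1)

lemma uniformNegOneOne_Icc_le (a b : ℝ) :
    uniformNegOneOne (Icc a b) ≤ ENNReal.ofReal ((b - a) / 2) := by
  rw [uniformNegOneOne, Measure.smul_apply, Measure.restrict_apply measurableSet_Icc, smul_eq_mul]
  calc (2 : ℝ≥0∞)⁻¹ * volume (Icc a b ∩ Icc (-1) 1)
      ≤ (2 : ℝ≥0∞)⁻¹ * volume (Icc a b) := by gcongr; exact inter_subset_left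
    _ = ENNReal.ofReal ((b - a) / 2) := by
        rw [Real.volume_Icc, div_eq_inv_mul, ENNReal.ofReal_mul (by norm_num),
          ENNReal.ofReal_inv_of_pos two_pos, ENNReal.ofReal_ofNat]

variable {Ω : Type*} [MeasurableSpace Ω] {μ : Measure Ω}

lemma ae_mem_Icc_of_map_eq_uniformNegOneOne {Y : Ω → ℝ} (hY : Measurable Y)
    (hlaw : μ.map Y = uniformNegOneOne) :
    ∀ᵐ ω ∂μ, Y ω ∈ Icc (-1 : ℝ) 1 := by
  refine ae_of_ae_map hY.aemeasurable ?_
  rw [hlaw, uniformNegOneOne]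
  exact Measure.ae_smul_measure (ae_restrict_mem measurableSet_Icc) _

lemma integral_eq_zero_of_map_eq_uniformNegOneOne {Y : Ω → ℝ} (hY : Measurable Y)
    (hlaw : μ.map Y = uniformNegOneOne) :
    μ[Y] = 0 := by
  rw [← (integral_map hY.aemeasurable aestronglyMeasurable_id : ∫ x, x ∂(μ.map Y) = _), hlaw,
    uniformNegOneOne, integral_smul_measure, integral_Icc_eq_integral_Ioc,
    ← intervalIntegral.integral_of_le (by norm_num), integral_id]
  norm_num

lemma hasSubgaussianMGF_mul_of_map_eq_uniformNegOneOne [IsProbabilityMeasure μ] {Y : Ω → ℝ}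
    (hY : Measurable Y) (hlaw : μ.map Y = uniformNegOneOne) {a : ℝ} (ha : |a| ≤ 1) :
    HasSubgaussianMGF (fun ω ↦ Y ω * a) 1 μ := by
  have h := hasSubgaussianMGF_of_mem_Icc_of_integral_eq_zero (μ := μ) (a := -1) (b := 1)
    (hY.mul_const a).aemeasurable ?_ ?_
  · convert h
    norm_num
  · filter_upwards [ae_mem_Icc_of_map_eq_uniformNegOneOne hY hlaw] with ω hω
    rw [mem_Icc, ← abs_le, abs_mul]
    exact mul_le_one₀ (abs_le.2 hω) (abs_nonneg _) ha
  · rw [integral_mul_const, integral_eq_zero_of_map_eq_uniformNegOneOne hY hlaw, zero_mul]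

lemma ProbabilityTheory.HasSubgaussianMGF.measureReal_abs_ge_le [IsFiniteMeasure μ]
    {X : Ω → ℝ} {c : ℝ≥0} (h : HasSubgaussianMGF X c μ) {ε : ℝ} (hε : 0 ≤ ε) :
    μ.real {ω | ε ≤ |X ω|} ≤ 2 * exp (-ε ^ 2 / (2 * c)) := by
  calc μ.real {ω | ε ≤ |X ω|} ≤ μ.real ({ω | ε ≤ X ω} ∪ {ω | ε ≤ (-X) ω}) :=
        measureReal_mono fun ω (hω : ε ≤ |X ω|) ↦ le_abs.1 hω
    _ ≤ μ.real {ω | ε ≤ X ω} + μ.real {ω | ε ≤ (-X) ω} := measureReal_union_le _ _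
    _ ≤ 2 * exp (-ε ^ 2 / (2 * c)) := by
        linarith [h.measure_ge_le hε, h.neg.measure_ge_le hε]

lemma measureReal_abs_sum_mul_ge_le [IsProbabilityMeasure μ] {ι : Type*} [Fintype ι]
    {y : ι → Ω → ℝ} (hy : ∀ j, Measurable (y j)) (hindep : iIndepFun y μ)
    (hlaw : ∀ j, μ.map (y j) = uniformNegOneOne)
    {a : ι → ℝ} (ha : ∀ j, |a j| ≤ 1) {ε : ℝ} (hε : 0 ≤ ε) :
    μ.real {ω | ε ≤ |∑ j, y j ω * a j|} ≤ 2 * exp (-ε ^ 2 / (2 * Fintype.card ι)) := by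
  have hsum := HasSubgaussianMGF.sum_of_iIndepFun (s := Finset.univ)
    (hindep.comp (fun j x ↦ x * a j) fun j ↦ measurable_id.mul_const _)
    fun j _ ↦ hasSubgaussianMGF_mul_of_map_eq_uniformNegOneOne (hy j) (hlaw j) (ha j)
  simpa using hsum.measureReal_abs_ge_le hε

lemma ProbabilityTheory.iIndepFun.indepFun_sum_erase_mul {ι : Type*} [Fintype ι]
    [DecidableEq ι] {y : ι → Ω → ℝ} (hindep : iIndepFun y μ) (hy : ∀ j, Measurable (y j))
    (a : ι → ℝ) (i : ι) :
    IndepFun (fun ω ↦ ∑ j ∈ Finset.univ.erase i, y j ω * a j) (y i) μ := by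
  have h := hindep.indepFun_finset (Finset.univ.erase i) {i} (by simp) hy
  convert h.comp (φ := fun z : Finset.univ.erase i → ℝ ↦ ∑ j, z j * a j) (by fun_prop)
    (measurable_pi_apply (⟨i, Finset.mem_singleton_self i⟩ : ({i} : Finset ι))) using 1
  · funext ω
    exact (Finset.sum_coe_sort _ fun j ↦ y j ω * a j).symm
  · rfl

lemma measure_preimage_le_of_indepFun [IsProbabilityMeasure μ] {α β : Type*}
    [MeasurableSpace α] [MeasurableSpace β]
    {S : Ω → α} {Y : Ω → β} (hS : Measurable S) (hY : Measurable Y) (hind : IndepFun S Y μ)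
    {E : Set (α × β)} (hE : MeasurableSet E) {δ : ℝ≥0∞}
    (hslice : ∀ s, μ.map Y (Prod.mk s ⁻¹' E) ≤ δ) :
    μ ((fun ω ↦ (S ω, Y ω)) ⁻¹' E) ≤ δ := by
  have : IsProbabilityMeasure (μ.map S) := Measure.isProbabilityMeasure_map hS.aemeasurable
  rw [← Measure.map_apply (hS.prodMk hY) hE,
    (indepFun_iff_map_prod_eq_prod_map_map hS.aemeasurable hY.aemeasurable).1 hind,
    Measure.prod_apply hE]
  calc ∫⁻ s, μ.map Y (Prod.mk s ⁻¹' E) ∂μ.map S ≤ ∫⁻ _, δ ∂μ.map S := lintegral_mono hslice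
    _ = δ := by simp

lemma measure_abs_add_mul_le_le [IsProbabilityMeasure μ] {S Y : Ω → ℝ} (hS : Measurable S)
    (hY : Measurable Y) (hind : IndepFun S Y μ) (hlaw : μ.map Y = uniformNegOneOne) {c : ℝ}
    (hc : 0 < c) (ε : ℝ) :
    μ {ω | |S ω + Y ω * c| ≤ ε} ≤ ENNReal.ofReal (ε / c) := by
  refine measure_preimage_le_of_indepFun (E := {p | |p.1 + p.2 * c| ≤ ε}) hS hY hind
    (measurableSet_le (by fun_prop) measurable_const) fun s ↦ ?_
  calc μ.map Y (Prod.mk s ⁻¹' {p | |p.1 + p.2 * c| ≤ ε})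
      ≤ μ.map Y (Icc ((-ε - s) / c) ((ε - s) / c)) := by
        refine measure_mono fun x (hx : |s + x * c| ≤ ε) ↦ ?_
        rw [abs_le] at hx
        rw [mem_Icc, div_le_iff₀ hc, le_div_iff₀ hc]
        constructor <;> linarith
    _ ≤ ENNReal.ofReal (((ε - s) / c - (-ε - s) / c) / 2) := hlaw ▸ uniformNegOneOne_Icc_le _ _
    _ = ENNReal.ofReal (ε / c) := by
        congr 1
        field_simp
        ring

lemma measureReal_abs_sum_mul_le_le [IsProbabilityMeasure μ] {ι : Type*} [Fintype ι]
    {y : ι → Ω → ℝ} (hy : ∀ j, Measurable (y j)) (hindep : iIndepFun y μ)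
    (hlaw : ∀ j, μ.map (y j) = uniformNegOneOne)
    {a : ι → ℝ} {i : ι} (hai : 0 < a i) {ε : ℝ} (hε : 0 ≤ ε) :
    μ.real {ω | |∑ j, y j ω * a j| ≤ ε} ≤ ε / a i := by
  classical
  have hsplit (ω : Ω) :
      ∑ j, y j ω * a j = ∑ j ∈ Finset.univ.erase i, y j ω * a j + y i ω * a i :=
    (Finset.sum_erase_add _ _ (Finset.mem_univ i)).symm
  simp_rw [hsplit]
  exact ENNReal.toReal_le_of_le_ofReal (by positivity) <|
    measure_abs_add_mul_le_le (by fun_prop) (hy i) (hindep.indepFun_sum_erase_mul hy a i)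
      (hlaw i) hai ε

lemma MeasureTheory.ofReal_one_sub_sum_le_measure_forall [IsProbabilityMeasure μ] {ι : Type*}
    [Fintype ι] {P : ι → Ω → Prop}
    {p : ι → ℝ} (hp : ∀ i, μ.real {ω | ¬ P i ω} ≤ p i) :
    ENNReal.ofReal (1 - ∑ i, p i) ≤ μ {ω | ∀ i, P i ω} := by
  have hcompl : μ.real {ω | ∀ i, P i ω}ᶜ ≤ ∑ i, p i := calc
    _ = μ.real (⋃ i, {ω | ¬ P i ω}) := by simp only [compl_ofPred, not_forall, ofPred_exists]
    _ ≤ ∑ i, μ.real {ω | ¬ P i ω} := measureReal_iUnion_fintype_le _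
    _ ≤ ∑ i, p i := Finset.sum_le_sum fun i _ ↦ hp i
  have := measureReal_union_le (μ := μ) {ω | ∀ i, P i ω} {ω | ∀ i, P i ω}ᶜ
  rw [union_compl_self, probReal_univ] at this
  exact ENNReal.ofReal_le_of_le_toReal (by linarith [measureReal_def μ {ω | ∀ i, P i ω}])

lemma measureReal_abs_sum_mul_small_or_large_le [IsProbabilityMeasure μ] {n : ℕ} (hn : 1 ≤ n)
    {y : Fin n → Ω → ℝ} (hy : ∀ j, Measurable (y j)) (hindep : iIndepFun y μ)
    (hlaw : ∀ j, μ.map (y j) = uniformNegOneOne) {a : Fin n → ℝ} {i : Fin n}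
    (hai : a i = 1 / 2) (ha : ∀ j, |a j| ≤ 1) :
    μ.real {ω | ¬ (1 / (4 * n) < |∑ j, y j ω * a j| ∧
      |∑ j, y j ω * a j| < 2 * √(n * log n))} ≤ 1 / (2 * n) + 2 * (n ^ 2 : ℝ)⁻¹ := by
  have hn1 : (1 : ℝ) ≤ n := by exact_mod_cast hn
  have hsmall : μ.real {ω | |∑ j, y j ω * a j| ≤ 1 / (4 * n)} ≤ 1 / (2 * n) := by
    convert measureReal_abs_sum_mul_le_le hy hindep hlaw (hai ▸ one_half_pos)
      (ε := 1 / (4 * n)) (by positivity) using 1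
    rw [hai]
    field_simp
    ring
  have htail :
      μ.real {ω | 2 * √(n * log n) ≤ |∑ j, y j ω * a j|} ≤ 2 * (n ^ 2 : ℝ)⁻¹ := by
    simpa only [Fintype.card_fin, exp_neg_sq_two_sqrt_mul_log_div _ hn1] using
      measureReal_abs_sum_mul_ge_le hy hindep hlaw ha (ε := 2 * √(n * log n)) (by positivity)
  calc _ ≤ μ.real ({ω | |∑ j, y j ω * a j| ≤ 1 / (4 * n)} ∪
        {ω | 2 * √(n * log n) ≤ |∑ j, y j ω * a j|}) :=
      measureReal_mono fun ω hω ↦ by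
        simpa only [mem_ofPred_eq, mem_union, not_and_or, not_lt] using hω
    _ ≤ _ := (measureReal_union_le _ _).trans (add_le_add hsmall htail)

end

/-- Let `n ≥ 8` and let `v 1, …, v n` be vectors with `v i i = 1/2` and `|v i j| ≤ 1`,
and let `y 1, …, y n` be independent random variables, each uniform on `[-1, 1]`.
Setting `u = ∑ i, y i • v i`, with probability at least `1/4` we simultaneously have
`min_i |u i| > 1/(4n)` and `max_i |u i| < 2√(n ln n)`. -/
theorem prob_good_vector_ge_quarter
    {Ω : Type*} [MeasurableSpace Ω] (μ : Measure Ω) [IsProbabilityMeasure μ]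
    (n : ℕ) (hn : 8 ≤ n)
    (v : Fin n → Fin n → ℝ)
    (hvdiag : ∀ i, v i i = 1/2) (hvbd : ∀ i j, |v i j| ≤ 1)
    (y : Fin n → Ω → ℝ) (hmeas : ∀ i, Measurable (y i))
    (hindep : iIndepFun y μ)
    (hunif : ∀ i, Measure.map (y i) μ
      = (2 : ENNReal)⁻¹ • (volume.restrict (Set.Icc (-1 : ℝ) 1))) :
    1 / 4 ≤ μ {ω | ∀ i : Fin n,
      1 / (4 * n) < |∑ j, y j ω * v j i| ∧
      |∑ j, y j ω * v j i| < 2 * Real.sqrt (n * Real.log n)} := by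
  have hn8 : (8 : ℝ) ≤ n := by exact_mod_cast hn
  have h2n : (2 : ℝ) / n ≤ 1 / 4 := by
    rw [div_le_iff₀ (by positivity)]
    linarith
  calc (1 / 4 : ℝ≥0∞) = ENNReal.ofReal (1 - 3 / 4) := by
        rw [show (1 : ℝ) - 3 / 4 = 4⁻¹ by norm_num, ENNReal.ofReal_inv_of_pos (by norm_num),
          ENNReal.ofReal_ofNat, one_div]
    _ ≤ ENNReal.ofReal (1 - ∑ _i : Fin n, (1 / (2 * n) + 2 * (n ^ 2 : ℝ)⁻¹)) := by
        gcongr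
        rw [Finset.sum_const, Finset.card_univ, Fintype.card_fin, nsmul_eq_mul,
          show (n : ℝ) * (1 / (2 * n) + 2 * (n ^ 2 : ℝ)⁻¹) = 1 / 2 + 2 / n by field_simp]
        linarith
    _ ≤ _ := ofReal_one_sub_sum_le_measure_forall fun i ↦
        measureReal_abs_sum_mul_small_or_large_le (a := fun j ↦ v j i) (by omega) hmeas hindep
          hunif (hvdiag i) fun j ↦ hvbd j i
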